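/- (Introduce) Let 𝔄 and 𝔅 be compatible τ-structures with B = A ⊎ {b} (disjoint union, b ∉ A). Let X ⊆ A and φ ∈ MSO(τ), and let 𝒢 = EMC(𝔄, X, φ) and 𝒢' = EMC(𝔅, X ∪ {b}, φ). Then: (1) if eval(𝒢) = ⊤ then eval(𝒢') = ⊤; (2) if eval(𝒢) = ⊥ then eval(𝒢') = ⊥. -/

import Mathlib

namespace MSOG

attribute [local instance] Classical.propDecidable

/-! ### Players and vocabularies -/

inductive Player where
  | falsifier
  | verifier
deriving DecidableEq

/-- A vocabulary: a finite set of relation symbol names and nullary symbol names.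
Symbols are drawn from `ℕ`; the arity of relation symbols is given by a global
arity function `ar : ℕ → ℕ`. -/
structure Vocab where
  rels : Finset ℕ
  nulls : Finset ℕ

def Vocab.addRel (τ : Vocab) (R : ℕ) : Vocab := ⟨insert R τ.rels, τ.nulls⟩

def Vocab.addNul (τ : Vocab) (c : ℕ) : Vocab := ⟨τ.rels, insert c τ.nulls⟩

/-! ### Structures -/

/-- A (partially interpreted) structure: a finite universe of objects (⊆ ℕ),
an interpretation of each relation symbol as a set of tuples (lists), and a
partial interpretation of nullary symbols (`none` = nil/uninterpreted). -/
structure Struc where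
  voc : Vocab
  univ : Finset ℕ
  rel : ℕ → List ℕ → Prop
  nul : ℕ → Option ℕ

/-- Wellformedness of a structure w.r.t. the arity function: relations only
interpret relation symbols of the vocabulary by tuples of the right length over
the universe, and nullary symbols of the vocabulary by universe elements. -/
structure Struc.WF (ar : ℕ → ℕ) (A : Struc) : Prop where
  rel_wf : ∀ R t, A.rel R t → R ∈ A.voc.rels ∧ t.length = ar R ∧ ∀ x ∈ t, x ∈ A.univ
  nul_wf : ∀ c x, A.nul c = some x → c ∈ A.voc.nulls ∧ x ∈ A.univ

def Struc.FullyInterpreted (A : Struc) : Prop := ∀ c ∈ A.voc.nulls, (A.nul c).isSome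

/-- The set `c̄^𝔄` of values of the interpreted nullary symbols. -/
def Struc.nulValues (A : Struc) : Finset ℕ :=
  A.voc.nulls.biUnion fun c => (A.nul c).toFinset

/-- Induced substructure `𝔄[s]`. -/
def Struc.restrict (A : Struc) (s : Finset ℕ) : Struc where
  voc := A.voc
  univ := A.univ ∩ s
  rel := fun R t => A.rel R t ∧ ∀ x ∈ t, x ∈ s
  nul := fun c =>
    match A.nul c with
    | some x => if x ∈ s then some x else none
    | none => none

/-- Expansion `(𝔄, u)` interpreting the nullary symbol `c` as `u` (possibly nil). -/
def Struc.addNul (A : Struc) (c : ℕ) (u : Option ℕ) : Struc where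
  voc := A.voc.addNul c
  univ := A.univ
  rel := A.rel
  nul := fun d => if d = c then u else A.nul d

/-- Expansion `(𝔄, U)` interpreting the unary relation symbol `R` as `U ⊆ A`. -/
def Struc.addRel (A : Struc) (R : ℕ) (U : Finset ℕ) : Struc where
  voc := A.voc.addRel R
  univ := A.univ
  rel := fun S t => if S = R then ∃ x ∈ U, t = [x] else A.rel S t
  nul := A.nul

/-- Expansion `(𝔄, U₁, …, U_l)` interpreting each unary relation symbol `R ∈ Rs`
as `U R ⊆ A`. -/
def Struc.addRels (A : Struc) (Rs : Finset ℕ) (U : ℕ → Finset ℕ) : Struc where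
  voc := ⟨A.voc.rels ∪ Rs, A.voc.nulls⟩
  univ := A.univ
  rel := fun S t => if S ∈ Rs then ∃ x ∈ U S, t = [x] else A.rel S t
  nul := A.nul

/-- `h` is an isomorphism from `A` to `B`. -/
structure Iso (A B : Struc) (h : ℕ → ℕ) : Prop where
  voc_eq : A.voc = B.voc
  bij : Set.BijOn h ↑A.univ ↑B.univ
  interp_iff : ∀ c ∈ A.voc.nulls, ((A.nul c).isSome ↔ (B.nul c).isSome)
  nul_map : ∀ c ∈ A.voc.nulls, ∀ x, A.nul c = some x → B.nul c = some (h x)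
  rel_map : ∀ R ∈ A.voc.rels, ∀ t : List ℕ, (∀ x ∈ t, x ∈ A.univ) →
    (A.rel R t ↔ B.rel R (t.map h))

/-- Two structures are compatible: interpreted nullary symbols agree, and the
identity is an isomorphism between the substructures induced by the common part
of the universes. -/
def Compatible (A B : Struc) : Prop :=
  A.voc = B.voc ∧
  (∀ c x y, A.nul c = some x → B.nul c = some y → x = y) ∧
  Iso (A.restrict (A.univ ∩ B.univ)) (B.restrict (A.univ ∩ B.univ)) id

/-- Union of two (compatible) structures. -/
def Struc.union (A B : Struc) : Struc where
  voc := A.voc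
  univ := A.univ ∪ B.univ
  rel := fun R t => A.rel R t ∨ B.rel R t
  nul := fun c =>
    match A.nul c with
    | some x => some x
    | none => B.nul c

/-! ### MSO formulas -/

/-- MSO formulas in negation normal form. -/
inductive MSO where
  | atom (R : ℕ) (cs : List ℕ)
  | natom (R : ℕ) (cs : List ℕ)
  | conj (φ ψ : MSO)
  | disj (φ ψ : MSO)
  | fall (c : ℕ) (φ : MSO)
  | fex (c : ℕ) (φ : MSO)
  | sall (R : ℕ) (φ : MSO)
  | sex (R : ℕ) (φ : MSO)
deriving DecidableEq

/-- `MSO.wf ar τ φ` means `φ ∈ MSO(τ)` (w.r.t. the arity function `ar`,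
quantified symbols being fresh unary relation resp. nullary symbols). -/
def MSO.wf (ar : ℕ → ℕ) : Vocab → MSO → Prop
  | τ, .atom R cs => R ∈ τ.rels ∧ cs.length = ar R ∧ ∀ c ∈ cs, c ∈ τ.nulls
  | τ, .natom R cs => R ∈ τ.rels ∧ cs.length = ar R ∧ ∀ c ∈ cs, c ∈ τ.nulls
  | τ, .conj φ ψ => MSO.wf ar τ φ ∧ MSO.wf ar τ ψ
  | τ, .disj φ ψ => MSO.wf ar τ φ ∧ MSO.wf ar τ ψ
  | τ, .fall c φ => c ∉ τ.nulls ∧ MSO.wf ar (τ.addNul c) φ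
  | τ, .fex c φ => c ∉ τ.nulls ∧ MSO.wf ar (τ.addNul c) φ
  | τ, .sall R φ => R ∉ τ.rels ∧ ar R = 1 ∧ MSO.wf ar (τ.addRel R) φ
  | τ, .sex R φ => R ∉ τ.rels ∧ ar R = 1 ∧ MSO.wf ar (τ.addRel R) φ

/-- Quantifier rank. -/
def MSO.qr : MSO → ℕ
  | .atom _ _ => 0
  | .natom _ _ => 0
  | .conj φ ψ => max φ.qr ψ.qr
  | .disj φ ψ => max φ.qr ψ.qr
  | .fall _ φ => φ.qr + 1
  | .fex _ φ => φ.qr + 1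
  | .sall _ φ => φ.qr + 1
  | .sex _ φ => φ.qr + 1

/-- Length `‖φ‖` of (an encoding of) the formula. -/
def MSO.len : MSO → ℕ
  | .atom _ cs => 1 + cs.length
  | .natom _ cs => 1 + cs.length
  | .conj φ ψ => 1 + φ.len + ψ.len
  | .disj φ ψ => 1 + φ.len + ψ.len
  | .fall _ φ => 1 + φ.len
  | .fex _ φ => 1 + φ.len
  | .sall _ φ => 1 + φ.len
  | .sex _ φ => 1 + φ.len

def MSO.IsAtomic : MSO → Prop
  | .atom _ _ | .natom _ _ => True
  | _ => False

def MSO.IsUniversal : MSO → Prop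
  | .conj _ _ | .fall _ _ | .sall _ _ => True
  | _ => False

def MSO.IsExistential : MSO → Prop
  | .disj _ _ | .fex _ _ | .sex _ _ => True
  | _ => False

/-- Classical (Tarskian) satisfaction `𝔄 ⊨ φ`. -/
def Sat : Struc → MSO → Prop
  | A, .atom R cs => ∃ t, cs.mapM A.nul = some t ∧ A.rel R t
  | A, .natom R cs => ∃ t, cs.mapM A.nul = some t ∧ ¬ A.rel R t
  | A, .conj φ ψ => Sat A φ ∧ Sat A ψ
  | A, .disj φ ψ => Sat A φ ∨ Sat A ψ
  | A, .fall c φ => ∀ a ∈ A.univ, Sat (A.addNul c (some a)) φ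
  | A, .fex c φ => ∃ a ∈ A.univ, Sat (A.addNul c (some a)) φ
  | A, .sall R φ => ∀ U ⊆ A.univ, Sat (A.addRel R U) φ
  | A, .sex R φ => ∃ U ⊆ A.univ, Sat (A.addRel R U) φ

/-! ### Games -/

/-- A game, presented as its unfolding: either one of the two fixed games
`⊤` (the verifier has a winning strategy) or `⊥` (the falsifier has a winning
strategy), or an initial position together with the player (if any) this
position is assigned to and the list of subgames reachable by the moves. -/
inductive Game (P : Type) where
  | top
  | bot
  | node (pos : P) (owner : Option Player) (subs : List (Game P))

theorem Game.sizeOf_lt_node {P : Type} [SizeOf P] {p : P} {o : Option Player}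
    {s : List (Game P)} {g : Game P} (h : g ∈ s) :
    sizeOf g < sizeOf (Game.node p o s) := by
  have := List.sizeOf_lt_of_mem h
  simp only [Game.node.sizeOf_spec]
  omega

/-- The evaluation algorithm: returns `⊤` if the verifier has a winning
strategy, `⊥` if the falsifier has one, and otherwise the unfolded game
recording the drawn plays. -/
noncomputable def Game.eval {P : Type} : Game P → Game P
  | .top => .top
  | .bot => .bot
  | .node p o subs =>
    let es := subs.attach.map fun g => Game.eval g.1
    match o with
    | some .falsifier =>
      if ∀ g ∈ es, g = Game.top then Game.top
      else if Game.bot ∈ es then Game.bot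
      else Game.node p o es
    | some .verifier =>
      if ∀ g ∈ es, g = Game.bot then Game.bot
      else if Game.top ∈ es then Game.top
      else Game.node p o es
    | none => Game.node p o es
termination_by g => sizeOf g
decreasing_by
  exact Game.sizeOf_lt_node g.2

/-- Equivalence of games, relative to an equivalence `pe` on positions:
the initial positions are equivalent (with equal assignment to players) and
there is a bijection `e` between the sets of subgames such that each subgame is
equivalent to its image. -/
def GEquiv {P : Type} (pe : P → P → Prop) : Game P → Game P → Prop
  | .top, .top => True
  | .bot, .bot => True
  | .node p o s, .node q o' t =>
    pe p q ∧ o = o' ∧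
    ∃ e : {g // g ∈ s} ≃ {g // g ∈ t}, ∀ g : {g // g ∈ s}, GEquiv pe g.1 (e g).1
  | _, _ => False
termination_by g _ => sizeOf g
decreasing_by
  exact Game.sizeOf_lt_node g.2

/-- Number of positions of a game. -/
def Game.size {P : Type} : Game P → ℕ
  | .top => 1
  | .bot => 1
  | .node _ _ subs => 1 + (subs.attach.map fun g => Game.size g.1).sum
termination_by g => sizeOf g
decreasing_by
  exact Game.sizeOf_lt_node g.2

/-! ### Model checking games -/

/-- Positions of extended model checking games: a structure, the current set
`X`, and a formula. -/
abbrev EPos : Type := Struc × Finset ℕ × MSO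

/-- Positions of classical model checking games. -/
abbrev CPos : Type := Struc × MSO

/-- Equivalence of positions: same `X ⊆ H₁ ∩ H₂`, same formula, and an
isomorphism between the structures fixing `X` pointwise. -/
def PosEquivE (p q : EPos) : Prop :=
  p.2.1 = q.2.1 ∧ p.2.2 = q.2.2 ∧
  p.2.1 ⊆ p.1.univ ∧ p.2.1 ⊆ q.1.univ ∧
  ∃ h : ℕ → ℕ, Iso p.1 q.1 h ∧ ∀ a ∈ p.2.1, h a = a

/-- Equivalence `≅` of extended model checking games. -/
def GEquivE : Game EPos → Game EPos → Prop := GEquiv PosEquivE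

/-- The extended model checking game `EMC(𝔄, X, φ)` (argument order:
formula, structure, set). -/
noncomputable def EMC : MSO → Struc → Finset ℕ → Game EPos
  | .atom R cs, A, X =>
    Game.node (A.restrict (X ∪ A.nulValues), X, .atom R cs)
      (if ∀ c ∈ cs, (A.nul c).isSome then
        (if Sat A (.atom R cs) then some .falsifier else some .verifier)
       else none) []
  | .natom R cs, A, X =>
    Game.node (A.restrict (X ∪ A.nulValues), X, .natom R cs)
      (if ∀ c ∈ cs, (A.nul c).isSome then
        (if Sat A (.natom R cs) then some .falsifier else some .verifier)
       else none) []
  | .conj φ ψ, A, X =>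
    Game.node (A.restrict (X ∪ A.nulValues), X, .conj φ ψ) (some .falsifier)
      [EMC φ A X, EMC ψ A X]
  | .disj φ ψ, A, X =>
    Game.node (A.restrict (X ∪ A.nulValues), X, .disj φ ψ) (some .verifier)
      [EMC φ A X, EMC ψ A X]
  | .fall c φ, A, X =>
    Game.node (A.restrict (X ∪ A.nulValues), X, .fall c φ) (some .falsifier)
      ((none :: A.univ.toList.map some).map fun u => EMC φ (A.addNul c u) X)
  | .fex c φ, A, X =>
    Game.node (A.restrict (X ∪ A.nulValues), X, .fex c φ) (some .verifier)
      ((none :: A.univ.toList.map some).map fun u => EMC φ (A.addNul c u) X)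
  | .sall R φ, A, X =>
    Game.node (A.restrict (X ∪ A.nulValues), X, .sall R φ) (some .falsifier)
      (A.univ.powerset.toList.map fun U => EMC φ (A.addRel R U) X)
  | .sex R φ, A, X =>
    Game.node (A.restrict (X ∪ A.nulValues), X, .sex R φ) (some .verifier)
      (A.univ.powerset.toList.map fun U => EMC φ (A.addRel R U) X)

/-- The classical model checking game `MC(𝔄, φ)` (argument order:
formula, structure); object quantifiers move only to elements of the universe
(no nil moves). -/
noncomputable def MC : MSO → Struc → Game CPos
  | .atom R cs, A =>
    Game.node (A.restrict A.nulValues, .atom R cs)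
      (if Sat A (.atom R cs) then some .falsifier else some .verifier) []
  | .natom R cs, A =>
    Game.node (A.restrict A.nulValues, .natom R cs)
      (if Sat A (.natom R cs) then some .falsifier else some .verifier) []
  | .conj φ ψ, A =>
    Game.node (A.restrict A.nulValues, .conj φ ψ) (some .falsifier)
      [MC φ A, MC ψ A]
  | .disj φ ψ, A =>
    Game.node (A.restrict A.nulValues, .disj φ ψ) (some .verifier)
      [MC φ A, MC ψ A]
  | .fall c φ, A =>
    Game.node (A.restrict A.nulValues, .fall c φ) (some .falsifier)
      (A.univ.toList.map fun a => MC φ (A.addNul c (some a)))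
  | .fex c φ, A =>
    Game.node (A.restrict A.nulValues, .fex c φ) (some .verifier)
      (A.univ.toList.map fun a => MC φ (A.addNul c (some a)))
  | .sall R φ, A =>
    Game.node (A.restrict A.nulValues, .sall R φ) (some .falsifier)
      (A.univ.powerset.toList.map fun U => MC φ (A.addRel R U))
  | .sex R φ, A =>
    Game.node (A.restrict A.nulValues, .sex R φ) (some .verifier)
      (A.univ.powerset.toList.map fun U => MC φ (A.addRel R U))

/-! ### The algorithms reduce, convert, forget, combine -/

/-- Remove subgames that are equivalent (`≅`) to an already kept one. -/
noncomputable def dedupEquiv : List (Game EPos) → List (Game EPos)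
  | [] => []
  | g :: gs =>
    let r := dedupEquiv gs
    if ∃ g' ∈ r, GEquivE g g' then r else g :: r

/-- The algorithm `reduce`. -/
noncomputable def reduce : Game EPos → Game EPos
  | .top => .top
  | .bot => .bot
  | .node p o subs =>
    if p.2.2.IsAtomic then Game.eval (Game.node p o subs)
    else
      let rs := subs.attach.map fun g => reduce g.1
      if p.2.2.IsUniversal ∧ Game.bot ∈ rs then Game.bot
      else if p.2.2.IsExistential ∧ Game.top ∈ rs then Game.top
      else
        let kept := dedupEquiv (rs.filter fun g => decide (g ≠ Game.top ∧ g ≠ Game.bot))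
        if kept = [] then Game.eval (Game.node p o ([] : List (Game EPos)))
        else Game.node p o kept
termination_by g => sizeOf g
decreasing_by
  exact Game.sizeOf_lt_node g.2

/-- Whether a game is a node whose position's structure is fully interpreted. -/
def Game.IsFullNodeE : Game EPos → Prop
  | .node q _ _ => q.1.FullyInterpreted
  | _ => False

/-- The algorithm `convert`, turning an extended model checking game into a
classical model checking game by keeping exactly the subgames whose position's
structure is fully interpreted. -/
noncomputable def convert : Game EPos → Game CPos
  | .top => .top
  | .bot => .bot
  | .node p o subs =>
    Game.node (p.1.restrict p.1.nulValues, p.2.2) o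
      (subs.attach.filterMap fun g =>
        if g.1.IsFullNodeE then some (convert g.1) else none)
termination_by g => sizeOf g
decreasing_by
  exact Game.sizeOf_lt_node g.2

/-- The algorithm `forget(𝒢, x)`. -/
noncomputable def forget : Game EPos → ℕ → Game EPos
  | .top, _ => .top
  | .bot, _ => .bot
  | .node p o subs, x =>
    let H := p.1
    let p' : EPos :=
      if ∃ c ∈ H.voc.nulls, H.nul c = some x then (H, p.2.1.erase x, p.2.2)
      else (H.restrict (H.univ.erase x), p.2.1.erase x, p.2.2)
    reduce (Game.node p' o (subs.attach.map fun g => forget g.1 x))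
termination_by g _ => sizeOf g
decreasing_by
  exact Game.sizeOf_lt_node g.2

/-- A pair of subgames that `combine` recurses on: both are nodes with the same
principal subformula and compatible structures. -/
def PairOk : Game EPos → Game EPos → Prop
  | .node p _ _, .node q _ _ => p.2.2 = q.2.2 ∧ Compatible p.1 q.1
  | _, _ => False

/-- The algorithm `combine(𝒢₁, 𝒢₂)`. -/
noncomputable def combine : Game EPos → Game EPos → Game EPos
  | .node p1 o1 s1, .node p2 _ s2 =>
    reduce (Game.node (p1.1.union p2.1, p1.2.1 ∪ p2.2.1, p1.2.2) o1
      ((s1.attach.flatMap fun g1 => s2.attach.map fun g2 => (g1, g2)).filterMap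
        fun gg => if PairOk gg.1.1 gg.2.1 then some (combine gg.1.1 gg.2.1) else none))
  | g, _ => g
termination_by g1 g2 => sizeOf g1 + sizeOf g2
decreasing_by
  have h1 := List.sizeOf_lt_of_mem gg.1.2
  have h2 := List.sizeOf_lt_of_mem gg.2.2
  simp only [Game.node.sizeOf_spec]
  omega

/-! ### Iterated exponentials and minima -/

/-- `iterexp t x = exp^t(x)`, the `t`-fold iterated exponential. -/
def iterexp : ℕ → ℕ → ℕ
  | 0, x => x
  | t + 1, x => 2 ^ iterexp t x

/-- `r` is the minimum of the set `V ⊆ ℤ`, in `WithTop ℤ` (with `min ∅ = ⊤`). -/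
def IsMinZ (r : WithTop ℤ) (V : Set ℤ) : Prop :=
  (∀ v ∈ V, r ≤ (v : WithTop ℤ)) ∧ (V = ∅ → r = ⊤) ∧
  (V.Nonempty → ∃ v ∈ V, r = (v : WithTop ℤ))

/-- `r` is the minimum of the set `V ⊆ WithTop ℤ` (with `min ∅ = ⊤`). -/
def IsMinW (r : WithTop ℤ) (V : Set (WithTop ℤ)) : Prop :=
  (∀ v ∈ V, r ≤ v) ∧ (V = ∅ → r = ⊤) ∧ (V.Nonempty → r ∈ V)

/-! ### Tree decompositions -/

/-- Rooted trees with bags at the nodes. -/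
inductive RTree where
  | node (bag : Finset ℕ) (children : List RTree)

theorem RTree.sizeOf_lt_node {b : Finset ℕ} {cs : List RTree} {c : RTree}
    (h : c ∈ cs) : sizeOf c < sizeOf (RTree.node b cs) := by
  have := List.sizeOf_lt_of_mem h
  simp only [RTree.node.sizeOf_spec]
  omega

def RTree.bag : RTree → Finset ℕ
  | .node b _ => b

/-- The subtree at an address (a node of the tree is identified with the list
of child indices leading to it from the root). -/
def RTree.subtreeAt : RTree → List ℕ → Option RTree
  | t, [] => some t
  | .node _ cs, i :: is =>
    match cs[i]? with
    | some c => c.subtreeAt is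
    | none => none

/-- The bag at an address. -/
def RTree.bagAt (t : RTree) (p : List ℕ) : Option (Finset ℕ) :=
  (t.subtreeAt p).map RTree.bag

/-- All objects occurring in bags of the tree (`Aᵢ` for the subtree at `i`). -/
def RTree.allObjs : RTree → Finset ℕ
  | .node b cs => b ∪ (cs.attach.map fun c => RTree.allObjs c.1).foldr (· ∪ ·) ∅
termination_by t => sizeOf t
decreasing_by
  exact RTree.sizeOf_lt_node c.2

/-- The number of nodes `|T|` of the tree. -/
def RTree.count : RTree → ℕ
  | .node _ cs => 1 + (cs.attach.map fun c => RTree.count c.1).sum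
termination_by t => sizeOf t
decreasing_by
  exact RTree.sizeOf_lt_node c.2

/-- Longest common prefix of two addresses. -/
def lcp : List ℕ → List ℕ → List ℕ
  | a :: as, b :: bs => if a = b then a :: lcp as bs else []
  | _, _ => []

/-- `(𝒯, 𝒳)` (coded as a single bag-labelled rooted tree) is a tree
decomposition of the relational structure `A`: bags are subsets of the universe
covering it, every tuple of every relation is contained in some bag, and if `r`
lies on the path between `p` and `q` then `X_p ∩ X_q ⊆ X_r`. -/
structure IsTreeDecomp (A : Struc) (t : RTree) : Prop where
  bags_sub : ∀ p b, t.bagAt p = some b → b ⊆ A.univ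
  covers : ∀ a ∈ A.univ, ∃ p b, t.bagAt p = some b ∧ a ∈ b
  rel_covers : ∀ R tup, A.rel R tup → ∃ p b, t.bagAt p = some b ∧ ∀ x ∈ tup, x ∈ b
  connected : ∀ p q r bp bq br, t.bagAt p = some bp → t.bagAt q = some bq →
    t.bagAt r = some br → lcp p q <+: r → (r <+: p ∨ r <+: q) → bp ∩ bq ⊆ br

/-- The width of the tree decomposition is at most `w`: every bag has at most
`w + 1` elements. -/
def TDWidthLE (t : RTree) (w : ℕ) : Prop :=
  ∀ p b, t.bagAt p = some b → b.card ≤ w + 1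

/-- A node of a nice tree decomposition is a leaf (singleton bag), an introduce
node, a forget node, or a join node. -/
def RTree.NiceStep : RTree → Prop
  | .node b [] => ∃ x, b = {x}
  | .node b [c] =>
      (∃ x, x ∉ c.allObjs ∧ b = insert x c.bag) ∨ (∃ x ∈ c.bag, b = c.bag.erase x)
  | .node b [c₁, c₂] => b = c₁.bag ∧ b = c₂.bag
  | .node _ _ => False

/-- A nice tree decomposition: every node is a leaf, introduce, forget, or join
node. -/
def RTree.Nice (t : RTree) : Prop := ∀ p s, t.subtreeAt p = some s → s.NiceStep

/-! ### The dynamic programming algorithm -/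

/-- `ValidAssign Rbar X U`: `U` is an assignment `(U₁, …, U_l)` of subsets of
`X` to the free unary relation symbols in `Rbar` (normalized to `∅` outside
`Rbar`). -/
def ValidAssign (Rbar X : Finset ℕ) (U : ℕ → Finset ℕ) : Prop :=
  (∀ R ∈ Rbar, U R ⊆ X) ∧ ∀ R ∉ Rbar, U R = ∅

/-- `W` matches `U` on the bag `Xi` (componentwise). -/
def Matches (Rbar Xi : Finset ℕ) (W U : ℕ → Finset ℕ) : Prop :=
  ∀ R ∈ Rbar, W R ∩ Xi = U R

/-- The reduced extended model checking game of the `τ`-expansion of `B`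
by the assignment `W`. -/
noncomputable def RED (φ : MSO) (Rbar : Finset ℕ) (B : Struc) (Xi : Finset ℕ)
    (W : ℕ → Finset ℕ) : Game EPos :=
  reduce (EMC φ (B.addRels Rbar W) Xi)

/-- The value `valᵢ(ℛ)` should be the minimum of `Σ αₖ |R_k^{𝔄ᵢ'} ∖ Xᵢ|` over
the matching expansions equivalent to `ℛ`; this is the summand for one `W`. -/
def cost (α : ℕ → ℤ) (Rbar : Finset ℕ) (X : Finset ℕ) (W : ℕ → Finset ℕ) : ℤ :=
  ∑ R ∈ Rbar, α R * (((W R) \ X).card : ℤ)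

/-- Invariant 12 at a node with substructure `Ai` and bag `Xi`, for the
table `S` and values `val`. -/
def Invariant (φ : MSO) (α : ℕ → ℤ) (Rbar : Finset ℕ) (Ai : Struc) (Xi : Finset ℕ)
    (S : (ℕ → Finset ℕ) → Set (Game EPos)) (val : Game EPos → WithTop ℤ) : Prop :=
  ∀ U, ValidAssign Rbar Xi U →
    ((∀ W, ValidAssign Rbar Ai.univ W → Matches Rbar Xi W U →
        RED φ Rbar Ai Xi W ≠ Game.bot →
        ∃! G, G ∈ S U ∧ GEquivE G (RED φ Rbar Ai Xi W)) ∧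
     (∀ G ∈ S U, G ≠ Game.bot ∧
        ∃ W, ValidAssign Rbar Ai.univ W ∧ Matches Rbar Xi W U ∧
          GEquivE (RED φ Rbar Ai Xi W) G) ∧
     (∀ G ∈ S U, IsMinZ (val G)
        {v : ℤ | ∃ W, ValidAssign Rbar Ai.univ W ∧ Matches Rbar Xi W U ∧
           GEquivE (RED φ Rbar Ai Xi W) G ∧ RED φ Rbar Ai Xi W ≠ Game.bot ∧
           v = cost α Rbar Xi W}))

end MSOG

/-!
Winning strategies are transported along the embedding of `𝔄` into `𝔅`. A move to an element
or subset of `𝔄` is answered by the same move in `𝔅`; a move in `𝔅` to an element outside `A`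
is simulated by the nil move in `𝔄`, and a move to `U ⊆ B` by the move to `U ∩ A`. In both
simulations every expansion of `𝔄` stays a substructure of the corresponding expansion of `𝔅`,
except that `𝔅` may interpret more nullary symbols. An atomic position is decided in `𝔄` only
if all its symbols are interpreted there, and then it is decided in the same way in `𝔅`.
The sets `X` only decorate positions and play no role in who wins.
-/

namespace MSOG

attribute [local instance] Classical.propDecidable

namespace Game

variable {P : Type}

def OutcomeTransfers (g h : Game P) : Prop :=
  (g.eval = .top → h.eval = .top) ∧ (g.eval = .bot → h.eval = .bot)

theorem eval_node_none (p : P) (s : List (Game P)) :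
    (node p none s).eval = node p none (s.map eval) := by
  rw [eval, List.attach_map_val]

theorem eval_node_falsifier (p : P) (s : List (Game P)) :
    (node p (some .falsifier) s).eval =
      if ∀ g ∈ s, g.eval = .top then .top
      else if ∃ g ∈ s, g.eval = .bot then .bot
      else node p (some .falsifier) (s.map eval) := by
  rw [eval, List.attach_map_val]
  simp only [List.forall_mem_map]
  simp only [List.mem_map]

theorem eval_node_verifier (p : P) (s : List (Game P)) :
    (node p (some .verifier) s).eval =
      if ∀ g ∈ s, g.eval = .bot then .bot
      else if ∃ g ∈ s, g.eval = .top then .top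
      else node p (some .verifier) (s.map eval) := by
  rw [eval, List.attach_map_val]
  simp only [List.forall_mem_map]
  simp only [List.mem_map]

theorem eval_node_falsifier_eq_top_iff (p : P) (s : List (Game P)) :
    (node p (some .falsifier) s).eval = .top ↔ ∀ g ∈ s, g.eval = .top := by
  rw [eval_node_falsifier]
  split_ifs <;> simp_all

theorem eval_node_falsifier_eq_bot_iff (p : P) (s : List (Game P)) :
    (node p (some .falsifier) s).eval = .bot ↔ ∃ g ∈ s, g.eval = .bot := by
  rw [eval_node_falsifier]
  split_ifs <;> simp_all

theorem eval_node_verifier_eq_top_iff (p : P) (s : List (Game P)) :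
    (node p (some .verifier) s).eval = .top ↔ ∃ g ∈ s, g.eval = .top := by
  rw [eval_node_verifier]
  split_ifs <;> simp_all

theorem eval_node_verifier_eq_bot_iff (p : P) (s : List (Game P)) :
    (node p (some .verifier) s).eval = .bot ↔ ∀ g ∈ s, g.eval = .bot := by
  rw [eval_node_verifier]
  split_ifs <;> simp_all

theorem OutcomeTransfers.of_owner_none (p : P) (s : List (Game P)) (h : Game P) :
    (node p none s).OutcomeTransfers h := by
  simp [OutcomeTransfers, eval_node_none]

theorem OutcomeTransfers.node {p q : P} {o : Option Player} {s t : List (Game P)}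
    (hst : ∀ g ∈ s, ∃ h ∈ t, g.OutcomeTransfers h)
    (hts : ∀ h ∈ t, ∃ g ∈ s, g.OutcomeTransfers h) :
    (Game.node p o s).OutcomeTransfers (Game.node q o t) := by
  rcases o with _ | _ | _
  · exact of_owner_none p s _
  · simp only [OutcomeTransfers, eval_node_falsifier_eq_top_iff,
      eval_node_falsifier_eq_bot_iff]
    refine ⟨fun htop h hh => ?_, fun ⟨g, hg, hbot⟩ => ?_⟩
    · obtain ⟨g, hg, hgh⟩ := hts h hh
      exact hgh.1 (htop g hg)
    · obtain ⟨h, hh, hgh⟩ := hst g hg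
      exact ⟨h, hh, hgh.2 hbot⟩
  · simp only [OutcomeTransfers, eval_node_verifier_eq_top_iff,
      eval_node_verifier_eq_bot_iff]
    refine ⟨fun ⟨g, hg, htop⟩ => ?_, fun hbot h hh => ?_⟩
    · obtain ⟨h, hh, hgh⟩ := hst g hg
      exact ⟨h, hh, hgh.1 htop⟩
    · obtain ⟨g, hg, hgh⟩ := hts h hh
      exact hgh.2 (hbot g hg)

theorem OutcomeTransfers.node_map {α β : Type*} {p q : P} {o : Option Player}
    {f : α → Game P} {f' : β → Game P} {l : List α} {l' : List β} (r : α → β → Prop)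
    (hr : ∀ a a', r a a' → (f a).OutcomeTransfers (f' a'))
    (hl : ∀ a ∈ l, ∃ a' ∈ l', r a a') (hl' : ∀ a' ∈ l', ∃ a ∈ l, r a a') :
    (Game.node p o (l.map f)).OutcomeTransfers (Game.node q o (l'.map f')) := by
  refine node (fun g hg => ?_) (fun h hh => ?_)
  · obtain ⟨a, ha, rfl⟩ := List.mem_map.1 hg
    obtain ⟨a', ha', hr'⟩ := hl a ha
    exact ⟨f' a', List.mem_map_of_mem ha', hr a a' hr'⟩
  · obtain ⟨a', ha', rfl⟩ := List.mem_map.1 hh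
    obtain ⟨a, ha, hr'⟩ := hl' a' ha'
    exact ⟨f a, List.mem_map_of_mem ha, hr a a' hr'⟩

end Game

theorem mem_none_cons_map_some (u : Option ℕ) (s : Finset ℕ) :
    u ∈ none :: s.toList.map some ↔ ∀ x ∈ u, x ∈ s := by
  cases u <;> simp

theorem Struc.restrict_nul_eq_some {A : Struc} {s : Finset ℕ} {c x : ℕ} :
    (A.restrict s).nul c = some x ↔ A.nul c = some x ∧ x ∈ s := by
  simp only [Struc.restrict]
  split <;> simp_all [and_comm]

/-- Nullary symbols uninterpreted in `A` may be interpreted in `B`. -/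
structure Struc.IsSubstructure (A B : Struc) : Prop where
  univ_subset : A.univ ⊆ B.univ
  nul_some : ∀ c x, A.nul c = some x → B.nul c = some x
  nul_mem : ∀ c x, A.nul c = some x → x ∈ A.univ
  rel_iff : ∀ R t, (∀ x ∈ t, x ∈ A.univ) → (A.rel R t ↔ B.rel R t)

theorem Compatible.isSubstructure {ar : ℕ → ℕ} {A B : Struc} (hA : A.WF ar) (hB : B.WF ar)
    (hcomp : Compatible A B) (hAB : A.univ ⊆ B.univ) : A.IsSubstructure B where
  univ_subset := hAB
  nul_some c x hx := by
    obtain ⟨hc, hxA⟩ := hA.nul_wf c x hx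
    have hx' : x ∈ A.univ ∩ B.univ := Finset.mem_inter.2 ⟨hxA, hAB hxA⟩
    exact (Struc.restrict_nul_eq_some.1
      (hcomp.2.2.nul_map c hc x (Struc.restrict_nul_eq_some.2 ⟨hx, hx'⟩))).1
  nul_mem c x hx := (hA.nul_wf c x hx).2
  rel_iff R t ht := by
    by_cases hR : R ∈ A.voc.rels
    · have hts : ∀ x ∈ t, x ∈ A.univ ∩ B.univ := fun x hx =>
        Finset.mem_inter.2 ⟨ht x hx, hAB (ht x hx)⟩
      have := hcomp.2.2.rel_map R hR t fun x hx => Finset.mem_inter.2 ⟨ht x hx, hts x hx⟩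
      simp only [Struc.restrict, List.map_id] at this
      rwa [and_iff_left hts, and_iff_left hts] at this
    · have hR' : R ∉ B.voc.rels := hcomp.1 ▸ hR
      exact iff_of_false (fun hr => hR (hA.rel_wf R t hr).1) fun hr => hR' (hB.rel_wf R t hr).1

namespace Struc.IsSubstructure

variable {A B : Struc}

theorem exists_mapM_nul (h : A.IsSubstructure B) {cs : List ℕ}
    (hcs : ∀ c ∈ cs, (A.nul c).isSome) :
    ∃ t, cs.mapM A.nul = some t ∧ cs.mapM B.nul = some t ∧ ∀ x ∈ t, x ∈ A.univ := by
  induction cs with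
  | nil => exact ⟨[], rfl, rfl, by simp⟩
  | cons c cs ih =>
    obtain ⟨x, hx⟩ := Option.isSome_iff_exists.1 (hcs c List.mem_cons_self)
    obtain ⟨t, hAt, hBt, ht⟩ := ih fun d hd => hcs d (List.mem_cons_of_mem c hd)
    refine ⟨x :: t, ?_, ?_, ?_⟩
    · simp [List.mapM_cons, hx, hAt]
    · simp [List.mapM_cons, h.nul_some c x hx, hBt]
    · simpa [h.nul_mem c x hx] using ht

theorem addNul (h : A.IsSubstructure B) (c : ℕ) {u u' : Option ℕ}
    (hu : ∀ x ∈ u, x ∈ A.univ) (huu' : ∀ x ∈ u, u' = some x) :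
    (A.addNul c u).IsSubstructure (B.addNul c u') where
  univ_subset := h.univ_subset
  nul_some d x hx := by
    by_cases hd : d = c
    · simp_all [Struc.addNul]
    · simpa [Struc.addNul, hd] using h.nul_some d x (by simpa [Struc.addNul, hd] using hx)
  nul_mem d x hx := by
    by_cases hd : d = c
    · simp_all [Struc.addNul]
    · exact h.nul_mem d x (by simpa [Struc.addNul, hd] using hx)
  rel_iff := h.rel_iff

theorem addRel (h : A.IsSubstructure B) (R : ℕ) {U U' : Finset ℕ}
    (hU : ∀ x ∈ A.univ, x ∈ U ↔ x ∈ U') :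
    (A.addRel R U).IsSubstructure (B.addRel R U') where
  univ_subset := h.univ_subset
  nul_some := h.nul_some
  nul_mem := h.nul_mem
  rel_iff S t ht := by
    by_cases hS : S = R
    · simp only [Struc.addRel, if_pos hS]
      have hx : ∀ x, t = [x] → (x ∈ U ↔ x ∈ U') := fun x hxt => hU x (ht x (by simp [hxt]))
      constructor <;> rintro ⟨x, hxU, rfl⟩
      exacts [⟨x, (hx x rfl).1 hxU, rfl⟩, ⟨x, (hx x rfl).2 hxU, rfl⟩]
    · simpa [Struc.addRel, hS] using h.rel_iff S t ht

theorem outcomeTransfers_EMC (h : A.IsSubstructure B) (φ : MSO) (X Y : Finset ℕ) :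
    (EMC φ A X).OutcomeTransfers (EMC φ B Y) := by
  induction φ generalizing A B with
  | atom R cs | natom R cs =>
    rw [EMC, EMC]
    by_cases hcs : ∀ c ∈ cs, (A.nul c).isSome
    · obtain ⟨t, hAt, hBt, ht⟩ := h.exists_mapM_nul hcs
      have hcsB : ∀ c ∈ cs, (B.nul c).isSome := by
        intro c hc
        obtain ⟨x, hx⟩ := Option.isSome_iff_exists.1 (hcs c hc)
        simp [h.nul_some c x hx]
      simp only [if_pos hcs, if_pos hcsB, Sat, hAt, hBt, Option.some.injEq, exists_eq_left',
        h.rel_iff R t ht]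
      exact Game.OutcomeTransfers.node (by simp) (by simp)
    · rw [if_neg hcs]
      exact Game.OutcomeTransfers.of_owner_none _ _ _
  | conj φ ψ ihφ ihψ | disj φ ψ ihφ ihψ =>
    rw [EMC, EMC]
    refine Game.OutcomeTransfers.node (fun g hg => ?_) (fun g hg => ?_) <;>
      rcases List.mem_pair.1 hg with rfl | rfl
    exacts [⟨_, by simp, ihφ h⟩, ⟨_, by simp, ihψ h⟩, ⟨_, by simp, ihφ h⟩, ⟨_, by simp, ihψ h⟩]
  | fall c φ ih | fex c φ ih =>
    rw [EMC, EMC]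
    refine Game.OutcomeTransfers.node_map
      (fun u u' => (A.addNul c u).IsSubstructure (B.addNul c u')) (fun _ _ => ih)
      (fun u hu => ?_) (fun u' _ => ?_)
    · rw [mem_none_cons_map_some] at hu
      exact ⟨u, (mem_none_cons_map_some u _).2 fun x hx => h.univ_subset (hu x hx),
        h.addNul c hu fun _ hx => hx⟩
    · by_cases hA : ∀ x ∈ u', x ∈ A.univ
      · exact ⟨u', (mem_none_cons_map_some u' _).2 hA, h.addNul c hA fun x hx => hx⟩
      · exact ⟨none, List.mem_cons_self, h.addNul c (by simp) (by simp)⟩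
  | sall R φ ih | sex R φ ih =>
    rw [EMC, EMC]
    refine Game.OutcomeTransfers.node_map
      (fun U U' => (A.addRel R U).IsSubstructure (B.addRel R U')) (fun _ _ => ih)
      (fun U hU => ⟨U, ?_, h.addRel R fun _ _ => Iff.rfl⟩)
      (fun U' _ => ⟨U' ∩ A.univ, ?_, h.addRel R fun x hx => by simp [hx]⟩)
    · simp only [Finset.mem_toList, Finset.mem_powerset] at hU ⊢
      exact hU.trans h.univ_subset
    · simp

end Struc.IsSubstructure

theorem statement_3_general (ar : ℕ → ℕ) (A B : Struc) (b : ℕ)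
    (X : Finset ℕ) (φ : MSO)
    (hA : A.WF ar) (hB : B.WF ar)
    (hcomp : Compatible A B) (hBu : B.univ = insert b A.univ) :
    (Game.eval (EMC φ A X) = Game.top → Game.eval (EMC φ B (insert b X)) = Game.top) ∧
    (Game.eval (EMC φ A X) = Game.bot → Game.eval (EMC φ B (insert b X)) = Game.bot) :=
  (hcomp.isSubstructure hA hB (hBu ▸ Finset.subset_insert b A.univ)).outcomeTransfers_EMC φ X
    (insert b X)

/-- Introduce: compatible `𝔄`, `𝔅` with `B = A ⊎ {b}`; winning
strategies on `EMC(𝔄, X, φ)` carry over to `EMC(𝔅, X ∪ {b}, φ)`. -/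
theorem statement_3 (ar : ℕ → ℕ) (τ : Vocab) (A B : Struc) (b : ℕ)
    (X : Finset ℕ) (φ : MSO)
    (harity : ∀ R ∈ τ.rels, 1 ≤ ar R)
    (hA : A.WF ar) (hB : B.WF ar) (hvA : A.voc = τ) (hvB : B.voc = τ)
    (hcomp : Compatible A B) (hb : b ∉ A.univ) (hBu : B.univ = insert b A.univ)
    (hX : X ⊆ A.univ) (hφ : MSO.wf ar τ φ) :
    (Game.eval (EMC φ A X) = Game.top → Game.eval (EMC φ B (insert b X)) = Game.top) ∧
    (Game.eval (EMC φ A X) = Game.bot → Game.eval (EMC φ B (insert b X)) = Game.bot) :=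
  statement_3_general ar A B b X φ hA hB hcomp hBu

end MSOG
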